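/- Assume that for every x ∈ X and u ∈ U, sup_{w ∈ W} l(x, u, w) ≥ 0, and that for every y ∈ Y the preimage h^{-1}{y} is a finite indexed set of at most M elements. If the optimal value J_⋆(y_0) = inf_{π ∈ Π} sup_N J_π^N(y_0) is bounded (finite) for every y_0 ∈ Y, then the value-iteration sequence V_0, V_1, V_2, ... is pointwise bounded above. -/

import Mathlib

open scoped BigOperators

noncomputable section

variable {X U W Y : Type*}

/-- The worst-case history `ρ_t(x, y_{0:t-1}, u_{0:t-1})`: the supremum (in `ℝ ∪ {-∞}`,
with `sSup ∅ = ⊥`) of accumulated stage costs over all disturbance sequences and initial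
states whose trajectory reaches `x` at time `t` and is consistent with the measurements. -/
noncomputable def rho (f : X → U → W → X) (h : X → Y) (l : X → U → W → ℝ)
    (t : ℕ) (x : X) (ys : ℕ → Y) (us : ℕ → U) : EReal :=
  sSup { c : EReal | ∃ (xs : ℕ → X) (ws : ℕ → W),
    xs t = x ∧
    (∀ τ < t, xs (τ + 1) = f (xs τ) (us τ) (ws τ)) ∧
    (∀ τ < t, h (xs τ) = ys τ) ∧
    c = ((∑ τ ∈ Finset.range t, l (xs τ) (us τ) (ws τ) : ℝ) : EReal) }

/-- Inputs generated causally by a strategy `π` from a measurement sequence: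
`u_t = μ_t(y_{0:t}, u_{0:t-1})`. -/
noncomputable def inputsOf (π : ℕ → List Y → List U → U) (ys : ℕ → Y) : ℕ → U
  | t => π t ((List.range (t + 1)).map ys) (List.ofFn fun i : Fin t => inputsOf π ys i)
  decreasing_by exact i.isLt

/-- Closed loop: state, list of past measurements and list of past inputs. -/
noncomputable def loop (f : X → U → W → X) (h : X → Y)
    (π : ℕ → List Y → List U → U) (x0 : X) (ws : ℕ → W) : ℕ → X × List Y × List U
  | 0 => (x0, [h x0], [])
  | t + 1 =>
    let p := loop f h π x0 ws t
    let u := π t p.2.1 p.2.2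
    let x' := f p.1 u (ws t)
    (x', p.2.1 ++ [h x'], p.2.2 ++ [u])

/-- Closed-loop state `x_t`. -/
noncomputable def cstate (f : X → U → W → X) (h : X → Y)
    (π : ℕ → List Y → List U → U) (x0 : X) (ws : ℕ → W) (t : ℕ) : X :=
  (loop f h π x0 ws t).1

/-- Closed-loop input `u_t = μ_t(y_{0:t}, u_{0:t-1})`. -/
noncomputable def cinput (f : X → U → W → X) (h : X → Y)
    (π : ℕ → List Y → List U → U) (x0 : X) (ws : ℕ → W) (t : ℕ) : U :=
  π t (loop f h π x0 ws t).2.1 (loop f h π x0 ws t).2.2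

/-- The worst-case `N`-horizon performance `J_π^N(y_0)`. -/
noncomputable def Jcost (f : X → U → W → X) (h : X → Y) (l : X → U → W → ℝ)
    (π : ℕ → List Y → List U → U) (N : ℕ) (y0 : Y) : EReal :=
  sSup { c : EReal | ∃ (x0 : X) (ws : ℕ → W), h x0 = y0 ∧
    c = ((∑ t ∈ Finset.range (N + 1),
      l (cstate f h π x0 ws t) (cinput f h π x0 ws t) (ws t) : ℝ) : EReal) }

/-- The information-state update `g` (componentwise), for preimages of `h`
enumerated by `ξ : Y → Fin M → X`. -/
noncomputable def gup {M : ℕ} (f : X → U → W → X) (l : X → U → W → ℝ)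
    (ξ : Y → Fin M → X) (r : Fin M → EReal) (ynext y : Y) (u : U) : Fin M → EReal :=
  fun i => sSup { c : EReal | ∃ (j : Fin M) (w : W),
    ξ ynext i = f (ξ y j) u w ∧ c = (l (ξ y j) u w : EReal) + r j }

/-- The information state `r_t`, defined recursively by `r_0 = 0` and
`r_t = g(r_{t-1}, y_t, y_{t-1}, u_{t-1})`. -/
noncomputable def rvec {M : ℕ} (f : X → U → W → X) (l : X → U → W → ℝ)
    (ξ : Y → Fin M → X) (ys : ℕ → Y) (us : ℕ → U) : ℕ → Fin M → EReal
  | 0 => 0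
  | t + 1 => gup f l ξ (rvec f l ξ ys us t) (ys (t + 1)) (ys t) (us t)

/-- The Bellman operator `B_u V(r, y) = sup_{v ∈ Y} V(g(r, v, y, u), v)`. -/
noncomputable def Bu {M : ℕ} (f : X → U → W → X) (l : X → U → W → ℝ)
    (ξ : Y → Fin M → X) (V : (Fin M → EReal) → Y → EReal) (u : U)
    (r : Fin M → EReal) (y : Y) : EReal :=
  ⨆ v : Y, V (gup f l ξ r v y u) v

/-- The Bellman operator `B V(r, y) = inf_{u ∈ U} B_u V(r, y)`. -/
noncomputable def Bop {M : ℕ} (f : X → U → W → X) (l : X → U → W → ℝ)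
    (ξ : Y → Fin M → X) (V : (Fin M → EReal) → Y → EReal)
    (r : Fin M → EReal) (y : Y) : EReal :=
  ⨅ u : U, Bu f l ξ V u r y

/-- The value iteration `V_0(r, y) = max_i r^i`, `V_{k+1} = B V_k`. -/
noncomputable def Vseq {M : ℕ} (f : X → U → W → X) (l : X → U → W → ℝ)
    (ξ : Y → Fin M → X) : ℕ → (Fin M → EReal) → Y → EReal
  | 0 => fun r _ => ⨆ i, r i
  | k + 1 => fun r y => Bop f l ξ (Vseq f l ξ k) r y

/-- The (possibly time-varying) information-state feedback policy
`μ_t(y_{0:t}, u_{0:t-1}) = η_t(r_t, y_t)`, where `r_0 = 0` and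
`r_{t+1} = g(r_t, y_{t+1}, y_t, u_t)`. -/
noncomputable def infoStrategyT {M : ℕ} [Nonempty Y] [Nonempty U]
    (f : X → U → W → X) (l : X → U → W → ℝ) (ξ : Y → Fin M → X)
    (η : ℕ → (Fin M → EReal) → Y → U) : ℕ → List Y → List U → U :=
  fun t ysl usl =>
    η t (rvec f l ξ (fun τ => ysl.getD τ (Classical.arbitrary Y))
          (fun τ => usl.getD τ (Classical.arbitrary U)) (ysl.length - 1))
      (ysl.getD (ysl.length - 1) (Classical.arbitrary Y))

/-- Stationary information-state feedback policy `μ_t(y_{0:t}, u_{0:t-1}) = η(r_t, y_t)`. -/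
noncomputable def infoStrategy {M : ℕ} [Nonempty Y] [Nonempty U]
    (f : X → U → W → X) (l : X → U → W → ℝ) (ξ : Y → Fin M → X)
    (η : (Fin M → EReal) → Y → U) : ℕ → List Y → List U → U :=
  infoStrategyT f l ξ (fun _ => η)

end

/-!
Fix a strategy `π` with `B := sup_N J_π^N(y) < ⊤`. Every component of an information state `r_t`
reachable under `π` from `y` is bounded by the worst-case accumulated cost `ρ_t`, which in turn is
bounded by `J_π^{t-1}(y)` (for `t = 0` by `J_π^0(y) ≥ 0`, from the positivity of the stage cost);
so `r_t ≤ B`. Answering every Bellman infimum by the input that `π` plays gives `V_k(r_t, y_t) ≤ B`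
along `π`, in particular `V_k(0, y) ≤ B`. Finally `V_k(r, y) ≤ V_k(r', y) + c` whenever
`r ≤ r' + c` for a real `c`, and `r ≤ 0 + c` for some real `c` since no `r i` is `⊤`.
-/

namespace EReal

lemma coe_add_sSup_le {a : ℝ} {s : Set EReal} {b : EReal} (h : ∀ c ∈ s, (a : EReal) + c ≤ b) :
    (a : EReal) + sSup s ≤ b := by
  rw [add_comm, ← le_sub_iff_add_le (.inl (coe_ne_bot a)) (.inl (coe_ne_top a))]
  exact sSup_le fun c hc =>
    (le_sub_iff_add_le (.inl (coe_ne_bot a)) (.inl (coe_ne_top a))).2 (add_comm c a ▸ h c hc)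

lemma iInf_le_iInf_add_coe {ι : Sort*} {g₁ g₂ : ι → EReal} {a : ℝ}
    (h : ∀ i, g₁ i ≤ g₂ i + a) : ⨅ i, g₁ i ≤ (⨅ i, g₂ i) + a := by
  rw [← sub_le_iff_le_add (.inl (coe_ne_bot a)) (.inl (coe_ne_top a))]
  exact le_iInf fun i =>
    (sub_le_iff_le_add (.inl (coe_ne_bot a)) (.inl (coe_ne_top a))).2 ((iInf_le g₁ i).trans (h i))

end EReal

section ValueIteration

variable {X U W Y : Type*} {M : ℕ} (f : X → U → W → X) (l : X → U → W → ℝ) (ξ : Y → Fin M → X)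

lemma gup_le_add {r r' : Fin M → EReal} {c : ℝ} (hr : ∀ j, r j ≤ r' j + c) (v y : Y) (u : U)
    (i : Fin M) : gup f l ξ r v y u i ≤ gup f l ξ r' v y u i + c := by
  refine sSup_le ?_
  rintro _ ⟨j, w, hf, rfl⟩
  calc (l (ξ y j) u w : EReal) + r j ≤ (l (ξ y j) u w : EReal) + (r' j + c) := by
        gcongr; exact hr j
    _ = ((l (ξ y j) u w : EReal) + r' j) + c := (add_assoc _ _ _).symm
    _ ≤ gup f l ξ r' v y u i + c := by gcongr; exact le_sSup ⟨j, w, hf, rfl⟩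

lemma Vseq_le_add {c : ℝ} (k : ℕ) {r r' : Fin M → EReal} (hr : ∀ i, r i ≤ r' i + c) (y : Y) :
    Vseq f l ξ k r y ≤ Vseq f l ξ k r' y + c := by
  induction k generalizing r r' y with
  | zero => exact iSup_le fun i => (hr i).trans (by gcongr; exact le_iSup r' i)
  | succ k ih =>
    refine EReal.iInf_le_iInf_add_coe fun u => iSup_le fun v => ?_
    calc Vseq f l ξ k (gup f l ξ r v y u) v ≤ Vseq f l ξ k (gup f l ξ r' v y u) v + c :=
          ih (gup_le_add f l ξ hr v y u) v
      _ ≤ Bu f l ξ (Vseq f l ξ k) u r' y + c := by gcongr; exact le_iSup_of_le v le_rfl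

end ValueIteration

section ClosedLoop

variable {X U W Y : Type*} (f : X → U → W → X) (h : X → Y) (π : ℕ → List Y → List U → U)

lemma inputsOf_congr {ys ys' : ℕ → Y} {t : ℕ} (hys : ∀ τ ≤ t, ys τ = ys' τ) :
    inputsOf π ys t = inputsOf π ys' t := by
  induction t using Nat.strong_induction_on with
  | _ t ih =>
    rw [inputsOf, inputsOf]
    congr 1
    · exact List.map_congr_left fun τ hτ => hys τ (Nat.lt_succ_iff.mp (List.mem_range.mp hτ))
    · exact congrArg List.ofFn <| funext fun i =>
        ih i i.isLt fun τ hτ => hys τ (hτ.trans i.isLt.le)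

lemma inputsOf_update_of_lt {ys : ℕ → Y} {s t : ℕ} (hts : t < s) (v : Y) :
    inputsOf π (Function.update ys s v) t = inputsOf π ys t :=
  inputsOf_congr π fun _ hτ => Function.update_of_ne (by omega) _ _

lemma loop_measurements (x0 : X) (ws : ℕ → W) (t : ℕ) :
    (loop f h π x0 ws t).2.1 = (List.range (t + 1)).map fun σ => h (cstate f h π x0 ws σ) := by
  induction t with
  | zero => rfl
  | succ t ih =>
    rw [List.range_succ, List.map_append, ← ih]
    rfl

lemma loop_inputs (x0 : X) (ws : ℕ → W) (t : ℕ) :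
    (loop f h π x0 ws t).2.2 = List.ofFn fun i : Fin t => cinput f h π x0 ws i := by
  induction t with
  | zero => rfl
  | succ t ih =>
    rw [List.ofFn_succ_last]
    simp only [Fin.val_castSucc, Fin.val_last, ← ih]
    rfl

lemma cstate_succ (x0 : X) (ws : ℕ → W) (t : ℕ) :
    cstate f h π x0 ws (t + 1) = f (cstate f h π x0 ws t) (cinput f h π x0 ws t) (ws t) :=
  rfl

lemma cinput_eq_inputsOf (x0 : X) (ws : ℕ → W) (t : ℕ) :
    cinput f h π x0 ws t = inputsOf π (fun σ => h (cstate f h π x0 ws σ)) t := by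
  induction t using Nat.strong_induction_on with
  | _ t ih =>
    rw [cinput, inputsOf, loop_measurements, loop_inputs]
    exact congrArg _ (congrArg List.ofFn (funext fun i => ih i i.isLt))

lemma cinput_eq_of_measurements {x0 : X} {ws : ℕ → W} {ys : ℕ → Y} {t : ℕ}
    (hys : ∀ σ ≤ t, h (cstate f h π x0 ws σ) = ys σ) :
    cinput f h π x0 ws t = inputsOf π ys t :=
  (cinput_eq_inputsOf f h π x0 ws t).trans (inputsOf_congr π hys)

variable {f h π} {xs : ℕ → X} {ws : ℕ → W} {ys : ℕ → Y} {t : ℕ}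

lemma cstate_eq_of_consistent
    (hdyn : ∀ τ < t, xs (τ + 1) = f (xs τ) (inputsOf π ys τ) (ws τ))
    (hmeas : ∀ τ < t, h (xs τ) = ys τ) {τ : ℕ} (hτ : τ ≤ t) :
    cstate f h π (xs 0) ws τ = xs τ := by
  induction τ using Nat.strong_induction_on with
  | _ τ ih =>
    cases τ with
    | zero => rfl
    | succ σ =>
      have hu : cinput f h π (xs 0) ws σ = inputsOf π ys σ :=
        cinput_eq_of_measurements f h π fun ρ hρ => by
          rw [ih ρ (by omega) (by omega), hmeas ρ (by omega)]
      rw [cstate_succ, ih σ (by omega) (by omega), hu, hdyn σ (by omega)]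

lemma cinput_eq_of_consistent
    (hdyn : ∀ τ < t, xs (τ + 1) = f (xs τ) (inputsOf π ys τ) (ws τ))
    (hmeas : ∀ τ < t, h (xs τ) = ys τ) {τ : ℕ} (hτ : τ < t) :
    cinput f h π (xs 0) ws τ = inputsOf π ys τ :=
  cinput_eq_of_measurements f h π fun σ hσ => by
    rw [cstate_eq_of_consistent hdyn hmeas (by omega), hmeas σ (by omega)]

end ClosedLoop

section WorstCaseHistory

variable {X U W Y : Type*} (f : X → U → W → X) (h : X → Y) (l : X → U → W → ℝ)

lemma rho_zero_le_zero (x : X) (ys : ℕ → Y) (us : ℕ → U) : rho f h l 0 x ys us ≤ 0 :=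
  sSup_le <| by rintro _ ⟨_, _, _, _, _, rfl⟩; simp

lemma coe_add_rho_le_rho_succ {ys : ℕ → Y} {us : ℕ → U} {t : ℕ} {x x' : X} {w : W}
    (hx : h x = ys t) (hx' : x' = f x (us t) w) :
    (l x (us t) w : EReal) + rho f h l t x ys us ≤ rho f h l (t + 1) x' ys us := by
  refine EReal.coe_add_sSup_le ?_
  rintro _ ⟨xs, ws, hxt, hdyn, hmeas, rfl⟩
  refine le_sSup ⟨Function.update xs (t + 1) x', Function.update ws t w,
    Function.update_self _ _ _, fun τ hτ => ?_, fun τ hτ => ?_, ?_⟩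
  · rcases Nat.lt_succ_iff_lt_or_eq.mp hτ with hτ | rfl
    · simp only [Function.update_of_ne (show τ + 1 ≠ t + 1 by omega),
        Function.update_of_ne (show τ ≠ t + 1 by omega), Function.update_of_ne hτ.ne, hdyn τ hτ]
    · simp only [Function.update_self, Function.update_of_ne (show τ ≠ τ + 1 by omega), hxt, hx']
  · rcases Nat.lt_succ_iff_lt_or_eq.mp hτ with hτ | rfl
    · rw [Function.update_of_ne (show τ ≠ t + 1 by omega), hmeas τ hτ]
    · rw [Function.update_of_ne (show τ ≠ τ + 1 by omega), hxt, hx]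
  · rw [← EReal.coe_add, Finset.sum_range_succ, add_comm]
    congr 2
    · refine Finset.sum_congr rfl fun τ hτ => ?_
      rw [Finset.mem_range] at hτ
      rw [Function.update_of_ne (show τ ≠ t + 1 by omega), Function.update_of_ne hτ.ne]
    · rw [Function.update_of_ne (show t ≠ t + 1 by omega), Function.update_self, hxt]

lemma rvec_le_rho [Nonempty W] {M : ℕ} {ξ : Y → Fin M → X} (hξ : ∀ y j, h (ξ y j) = y)
    (ys : ℕ → Y) (us : ℕ → U) (t : ℕ) (i : Fin M) :
    rvec f l ξ ys us t i ≤ rho f h l t (ξ (ys t) i) ys us := by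
  induction t generalizing i with
  | zero =>
    refine le_sSup ⟨fun _ => ξ (ys 0) i, fun _ => Classical.arbitrary W, rfl,
      fun _ hτ => absurd hτ (Nat.not_lt_zero _), fun _ hτ => absurd hτ (Nat.not_lt_zero _), ?_⟩
    simp [rvec]
  | succ t ih =>
    refine sSup_le ?_
    rintro _ ⟨j, w, hf, rfl⟩
    exact (add_le_add le_rfl (ih j)).trans (coe_add_rho_le_rho_succ f h l (hξ _ j) hf)

lemma rho_succ_le_Jcost (π : ℕ → List Y → List U → U) (ys : ℕ → Y) (t : ℕ) (x : X) :
    rho f h l (t + 1) x ys (inputsOf π ys) ≤ Jcost f h l π t (ys 0) := by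
  refine sSup_le ?_
  rintro _ ⟨xs, ws, -, hdyn, hmeas, rfl⟩
  refine le_sSup ⟨xs 0, ws, hmeas 0 t.succ_pos, ?_⟩
  congr 1
  refine Finset.sum_congr rfl fun τ hτ => ?_
  rw [Finset.mem_range] at hτ
  rw [cstate_eq_of_consistent hdyn hmeas hτ.le, cinput_eq_of_consistent hdyn hmeas hτ]

lemma rvec_le_iSup_Jcost [Nonempty W] {M : ℕ} {ξ : Y → Fin M → X} (hξ : ∀ y j, h (ξ y j) = y)
    (π : ℕ → List Y → List U → U) {y0 : Y} (hJ0 : 0 ≤ ⨆ N, Jcost f h l π N y0) (ys : ℕ → Y)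
    (hys : ys 0 = y0) (t : ℕ) (i : Fin M) :
    rvec f l ξ ys (inputsOf π ys) t i ≤ ⨆ N, Jcost f h l π N y0 := by
  refine (rvec_le_rho f h l hξ ys _ t i).trans ?_
  cases t with
  | zero => exact (rho_zero_le_zero f h l _ ys _).trans hJ0
  | succ t => exact hys ▸ (rho_succ_le_Jcost f h l π ys t _).trans (le_iSup_of_le t le_rfl)

end WorstCaseHistory

section InformationState

variable {X U W Y : Type*} {M : ℕ} (f : X → U → W → X) (l : X → U → W → ℝ)
  (ξ : Y → Fin M → X) (π : ℕ → List Y → List U → U)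

lemma rvec_congr {ys ys' : ℕ → Y} {us us' : ℕ → U} {t : ℕ} (hys : ∀ τ ≤ t, ys τ = ys' τ)
    (hus : ∀ τ < t, us τ = us' τ) : rvec f l ξ ys us t = rvec f l ξ ys' us' t := by
  induction t with
  | zero => rfl
  | succ t ih =>
    simp only [rvec, ih (fun τ hτ => hys τ (by omega)) (fun τ hτ => hus τ (by omega)),
      hys (t + 1) le_rfl, hys t (by omega), hus t (by omega)]

lemma rvec_update_succ (ys : ℕ → Y) (t : ℕ) (v : Y) :
    rvec f l ξ (Function.update ys (t + 1) v) (inputsOf π (Function.update ys (t + 1) v)) (t + 1)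
      = gup f l ξ (rvec f l ξ ys (inputsOf π ys) t) v (ys t) (inputsOf π ys t) := by
  have hys : ∀ τ ≤ t, Function.update ys (t + 1) v τ = ys τ :=
    fun τ hτ => Function.update_of_ne (by omega) _ _
  rw [rvec, rvec_congr f l ξ hys fun τ hτ => inputsOf_update_of_lt π (by omega) v,
    Function.update_self, hys t le_rfl, inputsOf_update_of_lt π t.lt_succ_self]

lemma Vseq_rvec_le {y0 : Y} {B : EReal}
    (hB : ∀ ys : ℕ → Y, ys 0 = y0 → ∀ t i, rvec f l ξ ys (inputsOf π ys) t i ≤ B)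
    (k t : ℕ) (ys : ℕ → Y) (hys : ys 0 = y0) :
    Vseq f l ξ k (rvec f l ξ ys (inputsOf π ys) t) (ys t) ≤ B := by
  induction k generalizing t ys with
  | zero => exact iSup_le (hB ys hys t)
  | succ k ih =>
    refine (iInf_le _ (inputsOf π ys t)).trans (iSup_le fun v => ?_)
    have hys' : Function.update ys (t + 1) v 0 = y0 := by
      rw [Function.update_of_ne (by omega), hys]
    simpa only [rvec_update_succ, Function.update_self] using ih (t + 1) _ hys'

end InformationState

lemma zero_le_Jcost_zero {X U W Y : Type*} (f : X → U → W → X) (h : X → Y)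
    (l : X → U → W → ℝ) (π : ℕ → List Y → List U → U)
    (pos : ∀ (x : X) (u : U), (0 : EReal) ≤ ⨆ w : W, (l x u w : EReal)) {x0 : X} {y0 : Y}
    (hx0 : h x0 = y0) : 0 ≤ Jcost f h l π 0 y0 :=
  (pos x0 (π 0 [h x0] [])).trans <| iSup_le fun w =>
    le_sSup ⟨x0, fun _ => w, hx0, by simp [cstate, cinput, loop]⟩

theorem VI_bounded_of_value_bounded_general {X U W Y : Type*}
    [Nonempty W] {M : ℕ} (f : X → U → W → X) (h : X → Y)
    (hsurj : Function.Surjective h) (l : X → U → W → ℝ) (ξ : Y → Fin M → X)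
    (pos : ∀ (x : X) (u : U), (0 : EReal) ≤ ⨆ w : W, (l x u w : EReal))
    (hξ : ∀ y : Y, Set.range (ξ y) = {x : X | h x = y})
    (hJ : ∀ y0 : Y,
      (⨅ π : ℕ → List Y → List U → U, ⨆ N : ℕ, Jcost f h l π N y0) < ⊤) :
    ∀ (r : Fin M → EReal), (∀ i, r i ≠ ⊤) → ∀ y : Y,
      (⨆ k : ℕ, Vseq f l ξ k r y) < ⊤ := by
  intro r hr y
  obtain ⟨π, hπ⟩ := iInf_lt_iff.mp (hJ y)
  set B := ⨆ N, Jcost f h l π N y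
  obtain ⟨x0, hx0⟩ := hsurj y
  have hB0 : 0 ≤ B := (zero_le_Jcost_zero f h l π pos hx0).trans (le_iSup_of_le 0 le_rfl)
  have hξh : ∀ y j, h (ξ y j) = y := fun y j => (hξ y).subset ⟨j, rfl⟩
  have hV0 : ∀ k, Vseq f l ξ k 0 y ≤ B := fun k =>
    Vseq_rvec_le f l ξ π (rvec_le_iSup_Jcost f h l hξh π hB0) k 0 (fun _ => y) rfl
  obtain ⟨c, hc⟩ : ∃ c : ℝ, ∀ i, r i ≤ c := (Finite.exists_le fun i => (r i).toReal).imp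
    fun c hc i => (EReal.le_coe_toReal (hr i)).trans (EReal.coe_le_coe_iff.2 (hc i))
  calc ⨆ k, Vseq f l ξ k r y ≤ B + c := iSup_le fun k =>
        (Vseq_le_add f l ξ k (r' := 0) (by simpa using hc) y).trans (by gcongr; exact hV0 k)
    _ < ⊤ := EReal.add_lt_top hπ.ne (EReal.coe_ne_top c)

/-- Under the positivity and finite-preimage assumptions, if the optimal
value `J_⋆(y_0) = inf_π sup_N J_π^N(y_0)` is finite for every `y_0 ∈ Y`, then the
value-iteration sequence `V_0, V_1, V_2, …` is pointwise bounded above (on the domain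
`(ℝ ∪ {-∞})^M × Y`). -/
theorem VI_bounded_of_value_bounded {X U W Y : Type*} [Nonempty X] [Nonempty U]
    [Nonempty W] [Nonempty Y] {M : ℕ} (f : X → U → W → X) (h : X → Y)
    (hsurj : Function.Surjective h) (l : X → U → W → ℝ) (ξ : Y → Fin M → X)
    (pos : ∀ (x : X) (u : U), (0 : EReal) ≤ ⨆ w : W, (l x u w : EReal))
    (hξ : ∀ y : Y, Set.range (ξ y) = {x : X | h x = y})
    (hJ : ∀ y0 : Y,
      (⨅ π : ℕ → List Y → List U → U, ⨆ N : ℕ, Jcost f h l π N y0) < ⊤) :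
    ∀ (r : Fin M → EReal), (∀ i, r i ≠ ⊤) → ∀ y : Y,
      (⨆ k : ℕ, Vseq f l ξ k r y) < ⊤ :=
  VI_bounded_of_value_bounded_general f h hsurj l ξ pos hξ hJ
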